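/- Let G be a profinite group and S an infinite suitable subset of G. Then |S| = w(G); in particular any two infinite suitable subsets of a profinite group have the same cardinality. -/

import Mathlib

universe u

/-- The weight of a topological space: the minimal cardinality of a basis of the topology. -/
noncomputable def topWeight (X : Type u) [TopologicalSpace X] : Cardinal.{u} :=
  sInf { c : Cardinal.{u} |
    ∃ B : Set (Set X), TopologicalSpace.IsTopologicalBasis B ∧ Cardinal.mk B = c }

/-- `S` is a suitable subset of the topological group `G`. -/
def IsSuitable (G : Type u) [Group G] [TopologicalSpace G] [IsTopologicalGroup G]
    (S : Set G) : Prop :=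
  (1 : G) ∉ S ∧ IsClosed (S ∪ {1}) ∧ DiscreteTopology S ∧
    (Subgroup.closure S).topologicalClosure = ⊤

/-!
Choosing, around each point of a discrete subspace, a basic open set isolating it gives
`#S ≤ w(G)`. Conversely, the cosets of open normal subgroups form a basis, so `w(G) ≤ #N · ℵ₀`
where `N` is the set of open normal subgroups. As `S ∪ {1}` is compact and `S` is discrete, each
`H ∈ N` misses only a finite set `F` of points of `S`. Such an `H` of index `n` is the kernel of a
homomorphism `G → Sym(n)`, which is trivial on `S \ F`; since `S` topologically generates `G` and
the homomorphism has open kernel, it is determined by its values on `F`. So there are only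
countably many `H` for each finite `F ⊆ S`, and `#N ≤ #(Finset S) · ℵ₀ = #S`.
-/

open TopologicalSpace Cardinal

section Weight

variable {X : Type u} [TopologicalSpace X]

theorem topWeight_le_mk_of_isTopologicalBasis {B : Set (Set X)} (hB : IsTopologicalBasis B) :
    topWeight X ≤ #B :=
  csInf_le' ⟨B, hB, rfl⟩

variable (X) in
theorem exists_isTopologicalBasis_mk_eq_topWeight :
    ∃ B : Set (Set X), IsTopologicalBasis B ∧ #B = topWeight X :=
  csInf_mem (s := {c | ∃ B : Set (Set X), IsTopologicalBasis B ∧ #B = c})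
    ⟨_, _, isTopologicalBasis_opens, rfl⟩

theorem mk_le_topWeight_of_discreteTopology (s : Set X) [DiscreteTopology s] :
    #s ≤ topWeight X := by
  obtain ⟨B, hB, hBw⟩ := exists_isTopologicalBasis_mk_eq_topWeight X
  have isolate (x : s) : ∃ U ∈ B, (x : X) ∈ U ∧ ∀ y : s, (y : X) ∈ U → y = x := by
    obtain ⟨V, hV, hVx⟩ := isOpen_induced_iff.mp (isOpen_discrete {x})
    have hxV : x ∈ Subtype.val ⁻¹' V := by rw [hVx]; rfl
    obtain ⟨U, hUB, hxU, hUV⟩ := hB.exists_subset_of_mem_open hxV hV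
    refine ⟨U, hUB, hxU, fun y hy => ?_⟩
    have hyV : y ∈ Subtype.val ⁻¹' V := hUV hy
    rwa [hVx] at hyV
  choose U hUB hxU hU using isolate
  calc #s ≤ #B := mk_le_of_injective (f := fun x => ⟨U x, hUB x⟩) fun x y hxy =>
        hU y x (Subtype.mk.inj hxy ▸ hxU x)
    _ = topWeight X := hBw

end Weight

theorem finite_sdiff_of_isClosed_union_singleton {X : Type*} [TopologicalSpace X]
    [CompactSpace X] {s U : Set X} {a : X} [DiscreteTopology s] (hs : IsClosed (s ∪ {a}))
    (hU : IsOpen U) (ha : a ∈ U) : (s \ U).Finite := by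
  have hsU : (s ∪ {a}) ∩ Uᶜ = s \ U := by
    rw [Set.union_inter_distrib_right, Set.singleton_inter_eq_empty.mpr (not_not.mpr ha),
      Set.union_empty, Set.sdiff_eq]
  refine IsCompact.finite ?_ ⟨.of_subset ‹_› Set.sdiff_subset⟩
  rw [← hsU]
  exact (hs.inter hU.isClosed_compl).isCompact

theorem Subgroup.exists_monoidHom_perm_ker_eq {G : Type*} [Group G] (H : Subgroup G) [H.Normal]
    [Finite (G ⧸ H)] : ∃ φ : G →* Equiv.Perm (Fin (Nat.card (G ⧸ H))), φ.ker = H := by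
  refine ⟨(Finite.equivFin (G ⧸ H)).permCongrHom.toMonoidHom.comp
    (MulAction.toPermHom G (G ⧸ H)), ?_⟩
  rw [MonoidHom.ker_comp_of_injective _ _ (MulEquiv.injective _), ← normalCore_eq_ker,
    normalCore_eq_self]

section TopologicalGroup

variable {G : Type*} [Group G] [TopologicalSpace G] [IsTopologicalGroup G] {S : Set G}

theorem MonoidHom.eq_of_eqOn_of_isOpen_ker {M : Type*} [Group M]
    (hS : (Subgroup.closure S).topologicalClosure = ⊤) {φ ψ : G →* M}
    (hφ : IsOpen (φ.ker : Set G)) (hψ : IsOpen (ψ.ker : Set G)) (h : Set.EqOn φ ψ S) :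
    φ = ψ := by
  have hopen : IsOpen (φ.eqLocus ψ : Set G) :=
    Subgroup.isOpen_mono (H₁ := φ.ker ⊓ ψ.ker)
      (fun _ ⟨h₁, h₂⟩ => (MonoidHom.mem_ker.1 h₁).trans (MonoidHom.mem_ker.1 h₂).symm)
      (by rw [Subgroup.coe_inf]; exact hφ.inter hψ)
  have hle : (⊤ : Subgroup G) ≤ φ.eqLocus ψ := hS ▸
    Subgroup.topologicalClosure_minimal _ ((Subgroup.closure_le _).2 h)
      (Subgroup.isClosed_of_isOpen _ hopen)
  exact MonoidHom.ext fun x => hle (Subgroup.mem_top x)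

variable [CompactSpace G]

theorem finite_setOf_sdiff_subset_card_quotient_eq
    (hS : (Subgroup.closure S).topologicalClosure = ⊤) {F : Set G} (hF : F.Finite) (n : ℕ) :
    {H : OpenNormalSubgroup G | S \ F ⊆ H ∧ Nat.card (G ⧸ (H : Subgroup G)) = n}.Finite := by
  set T := {H : OpenNormalSubgroup G | S \ F ⊆ H ∧ Nat.card (G ⧸ (H : Subgroup G)) = n}
  have hrep : ∀ H ∈ T, ∃ φ : G →* Equiv.Perm (Fin n), φ.ker = H := by
    rintro H ⟨-, rfl⟩
    exact (H : Subgroup G).exists_monoidHom_perm_ker_eq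
  choose! φ hφ using hrep
  have := hF.to_subtype
  refine Set.Finite.of_finite_image (f := fun H (x : F) => φ H x) (Set.toFinite _) ?_
  intro H₁ h₁ H₂ h₂ heq
  have hker {H} (hH : H ∈ T) {x} (hxS : x ∈ S) (hxF : x ∉ F) : φ H x = 1 := by
    rw [← MonoidHom.mem_ker, hφ H hH]
    exact hH.1 ⟨hxS, hxF⟩
  have hagree : Set.EqOn (φ H₁) (φ H₂) S := fun x hxS => by
    by_cases hxF : x ∈ F
    · exact congrFun heq ⟨x, hxF⟩
    · rw [hker h₁ hxS hxF, hker h₂ hxS hxF]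
  have hφ₁₂ : φ H₁ = φ H₂ := MonoidHom.eq_of_eqOn_of_isOpen_ker hS
    ((hφ H₁ h₁).symm ▸ H₁.isOpen') ((hφ H₂ h₂).symm ▸ H₂.isOpen') hagree
  exact OpenNormalSubgroup.toSubgroup_injective
    (show (H₁ : Subgroup G) = H₂ by rw [← hφ H₁ h₁, ← hφ H₂ h₂, hφ₁₂])

theorem countable_setOf_sdiff_subset (hS : (Subgroup.closure S).topologicalClosure = ⊤)
    {F : Set G} (hF : F.Finite) : {H : OpenNormalSubgroup G | S \ F ⊆ H}.Countable := by
  refine (Set.countable_iUnion fun n =>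
    (finite_setOf_sdiff_subset_card_quotient_eq hS hF n).countable).mono fun H hH => ?_
  exact Set.mem_iUnion.2 ⟨_, hH, rfl⟩

theorem mk_openNormalSubgroup_le (hS : (Subgroup.closure S).topologicalClosure = ⊤)
    (hinf : S.Infinite) (hfin : ∀ H : OpenNormalSubgroup G, (S \ H).Finite) :
    #(OpenNormalSubgroup G) ≤ #S := by
  have := hinf.to_subtype
  let outside (H : OpenNormalSubgroup G) : Finset S :=
    ((hfin H).preimage Subtype.val_injective.injOn).toFinset
  have hfiber (F : Finset S) : #(outside ⁻¹' {F}) ≤ ℵ₀ := by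
    refine Set.Countable.le_aleph0 <|
      (countable_setOf_sdiff_subset hS (F.finite_toSet.image Subtype.val)).mono ?_
    rintro H rfl x ⟨hxS, hxF⟩
    by_contra hxH
    exact hxF ⟨⟨x, hxS⟩, by simp [outside, hxH], rfl⟩
  calc #(OpenNormalSubgroup G) ≤ #(Finset S) * ℵ₀ :=
        mk_le_mk_mul_of_mk_preimage_le outside hfiber
    _ = #S := by rw [mk_finset_of_infinite, mul_aleph0_eq (aleph0_le_mk S)]

variable [TotallyDisconnectedSpace G]

theorem isTopologicalBasis_range_preimage_mk_openNormalSubgroup :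
    IsTopologicalBasis (Set.range fun p : Σ H : OpenNormalSubgroup G, G ⧸ (H : Subgroup G) =>
      (QuotientGroup.mk ⁻¹' {p.2} : Set G)) := by
  refine isTopologicalBasis_of_isOpen_of_nhds ?_ fun x U hxU hU => ?_
  · rintro _ ⟨⟨H, q⟩, rfl⟩
    have := QuotientGroup.discreteTopology H.isOpen'
    exact (isOpen_discrete {q}).preimage QuotientGroup.continuous_mk
  · obtain ⟨H, hH⟩ := ProfiniteGrp.exist_openNormalSubgroup_sub_open_nhds_of_one
      (hU.preimage (continuous_const_mul x)) (by simpa using hxU)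
    refine ⟨_, ⟨⟨H, x⟩, rfl⟩, rfl, fun y hy => ?_⟩
    simpa using hH (QuotientGroup.eq.mp (Set.mem_singleton_iff.mp hy).symm)

theorem topWeight_le_mk_openNormalSubgroup_mul_aleph0 :
    topWeight G ≤ #(OpenNormalSubgroup G) * ℵ₀ :=
  calc topWeight G ≤ _ := topWeight_le_mk_of_isTopologicalBasis
        isTopologicalBasis_range_preimage_mk_openNormalSubgroup
    _ ≤ #(Σ H : OpenNormalSubgroup G, G ⧸ (H : Subgroup G)) := mk_range_le
    _ = sum fun H : OpenNormalSubgroup G => #(G ⧸ (H : Subgroup G)) := mk_sigma _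
    _ ≤ sum fun _ : OpenNormalSubgroup G => ℵ₀ := sum_le_sum _ _ fun _ => mk_le_aleph0
    _ = #(OpenNormalSubgroup G) * ℵ₀ := sum_const' _ _

end TopologicalGroup

theorem card_infinite_suitable_eq_weight_general (G : Type u) [Group G] [TopologicalSpace G]
    [IsTopologicalGroup G] [CompactSpace G] [TotallyDisconnectedSpace G]
    (S : Set G) (hS : IsSuitable G S) (hinf : S.Infinite) :
    Cardinal.mk S = topWeight G := by
  obtain ⟨-, hclosed, _, hgen⟩ := hS
  have := hinf.to_subtype
  refine le_antisymm (mk_le_topWeight_of_discreteTopology S) ?_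
  have hfin (H : OpenNormalSubgroup G) : (S \ H).Finite :=
    finite_sdiff_of_isClosed_union_singleton hclosed H.isOpen' H.one_mem
  calc topWeight G ≤ #(OpenNormalSubgroup G) * ℵ₀ :=
        topWeight_le_mk_openNormalSubgroup_mul_aleph0
    _ ≤ #S * ℵ₀ := mul_le_mul_left (mk_openNormalSubgroup_le hgen hinf hfin) _
    _ = #S := mul_aleph0_eq (aleph0_le_mk S)

/-- An infinite suitable subset `S` of a profinite group `G` satisfies `|S| = w(G)`;
in particular any two infinite suitable subsets have the same cardinality. -/
theorem card_infinite_suitable_eq_weight (G : Type u) [Group G] [TopologicalSpace G]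
    [IsTopologicalGroup G] [CompactSpace G] [T2Space G] [TotallyDisconnectedSpace G]
    (S : Set G) (hS : IsSuitable G S) (hinf : S.Infinite) :
    Cardinal.mk S = topWeight G :=
  card_infinite_suitable_eq_weight_general G S hS hinf
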